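/- Let C be a chain complex as in the context, let h ∈ H^i(C) be a torsion cohomology class, let p be a prime and m ≥ 1, and suppose the reduction of h modulo p^m is nonzero. Then there exist a chain c ∈ C_i and a cocycle φ ∈ C^i representing h such that ∂c ∈ p^m·C_{i−1} and φ(c) is not divisible by p^m. -/

import Mathlib

/-!
Suppose `p^m` divides `φ c` for every chain `c` with `∂c ∈ p^m·C_{i-1}`. Then `φ mod p^m`
vanishes on the kernel of `∂ mod p^m`, so it factors through the image of `∂ mod p^m` in
`C_{i-1}/p^m`. The ring `ℤ/p^m` is self-injective (Baer's criterion, which for `ℤ/n` is Bézout),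
so the factor extends to all of `C_{i-1}/p^m`, which exhibits `φ mod p^m` as a coboundary.
-/

structure FreeChainComplex where
  ι : ℕ → Type
  fin : ∀ i, Fintype (ι i)
  bd : ∀ i, ((ι (i + 1) → ℤ) →+ (ι i → ℤ))
  bd_bd : ∀ i (x : ι (i + 2) → ℤ), bd i (bd (i + 1) x) = 0

namespace FreeChainComplex

variable (X : FreeChainComplex)

abbrev Chain (i : ℕ) := X.ι i → ℤ

abbrev Cochain (i : ℕ) := (X.ι i → ℤ) →+ ℤ

/-- cochains with coefficients `ℤ/nℤ` -/
abbrev CochainMod (n i : ℕ) := (X.ι i → ℤ) →+ ZMod n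

def bdFrom : ∀ i : ℕ, ((X.ι i → ℤ) →+ (X.ι (i - 1) → ℤ))
  | 0 => 0
  | (j + 1) => X.bd j

def cb (i : ℕ) : X.Cochain i →+ X.Cochain (i + 1) where
  toFun φ := φ.comp (X.bd i)
  map_zero' := by ext x; simp
  map_add' _ _ := by ext x; simp

def cbMod (n i : ℕ) : X.CochainMod n i →+ X.CochainMod n (i + 1) where
  toFun φ := φ.comp (X.bd i)
  map_zero' := by ext x; simp
  map_add' _ _ := by ext x; simp

def cocycles (i : ℕ) : AddSubgroup (X.Cochain i) := (X.cb i).ker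

def cobds : ∀ i : ℕ, AddSubgroup (X.Cochain i)
  | 0 => ⊥
  | (j + 1) => (X.cb j).range

abbrev H (i : ℕ) := X.cocycles i ⧸ (X.cobds i).addSubgroupOf (X.cocycles i)

def cls (i : ℕ) (φ : X.Cochain i) (h : φ ∈ X.cocycles i) : X.H i :=
  QuotientAddGroup.mk ⟨φ, h⟩

def cocyclesMod (n i : ℕ) : AddSubgroup (X.CochainMod n i) := (X.cbMod n i).ker

def cobdsMod (n : ℕ) : ∀ i : ℕ, AddSubgroup (X.CochainMod n i)
  | 0 => ⊥
  | (j + 1) => (X.cbMod n j).range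

/-- the `i`-th cohomology with coefficients `ℤ/nℤ` -/
abbrev Hmod (n i : ℕ) :=
  X.cocyclesMod n i ⧸ (X.cobdsMod n i).addSubgroupOf (X.cocyclesMod n i)

/-- reduction of integral cochains modulo `n`, induced by the quotient `ℤ → ℤ/nℤ` -/
def redCochain (n i : ℕ) : X.Cochain i →+ X.CochainMod n i where
  toFun φ := (Int.castAddHom (ZMod n)).comp φ
  map_zero' := by ext x; simp
  map_add' _ _ := by ext x; simp

lemma red_cb (n i : ℕ) (φ : X.Cochain i) :
    X.redCochain n (i + 1) (X.cb i φ) = X.cbMod n i (X.redCochain n i φ) := by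
  ext x; simp [redCochain, cb, cbMod]

/-- reduction modulo `n` on cocycles -/
def redZ (n i : ℕ) : ↥(X.cocycles i) →+ ↥(X.cocyclesMod n i) :=
  AddMonoidHom.codRestrict ((X.redCochain n i).comp (X.cocycles i).subtype)
    (X.cocyclesMod n i)
    (fun φ => by
      have hφ : X.cb i (φ : X.Cochain i) = 0 := φ.2
      simp only [cocyclesMod, AddMonoidHom.mem_ker, AddMonoidHom.coe_comp,
        AddSubgroup.coe_subtype, Function.comp_apply]
      rw [← red_cb, hφ, map_zero])

lemma redZ_maps (n i : ℕ) :
    (X.cobds i).addSubgroupOf (X.cocycles i) ≤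
      ((X.cobdsMod n i).addSubgroupOf (X.cocyclesMod n i)).comap (X.redZ n i) := by
  intro φ hφ
  simp only [AddSubgroup.mem_addSubgroupOf, AddSubgroup.mem_comap] at hφ ⊢
  cases i with
  | zero =>
      simp only [cobds, AddSubgroup.mem_bot] at hφ
      have : (X.redZ n 0 φ : X.CochainMod n 0) = X.redCochain n 0 (φ : X.Cochain 0) := rfl
      simp only [cobdsMod, AddSubgroup.mem_bot, this, hφ, map_zero]
  | succ j =>
      obtain ⟨ψ, hψ⟩ := hφ
      refine ⟨X.redCochain n j ψ, ?_⟩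
      have : (X.redZ n (j + 1) φ : X.CochainMod n (j + 1)) =
          X.redCochain n (j + 1) (φ : X.Cochain (j + 1)) := rfl
      rw [this, ← hψ, red_cb]

/-- the map induced on cohomology by the reduction `ℤ → ℤ/nℤ` -/
def redH (n i : ℕ) : X.H i →+ X.Hmod n i :=
  QuotientAddGroup.map _ _ (X.redZ n i) (X.redZ_maps n i)

end FreeChainComplex

namespace ZMod

variable {n : ℕ} [NeZero n]

theorem exists_mul_eq_of_annihilator_le {a v : ZMod n}
    (h : ∀ r : ZMod n, r * a = 0 → r * v = 0) : ∃ t, a * t = v := by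
  obtain ⟨A, rfl⟩ := intCast_surjective a
  obtain ⟨V, rfl⟩ := intCast_surjective v
  -- `d = n / gcd A n` kills `a`, hence `v`; so `gcd A n ∣ V`, and by Bézout `gcd A n ∈ a • ZMod n`.
  obtain ⟨d, hd⟩ : (A.gcd n : ℤ) ∣ n := Int.gcd_dvd_right _ _
  obtain ⟨e, he⟩ : (A.gcd n : ℤ) ∣ A := Int.gcd_dvd_left _ _
  have hd0 : d ≠ 0 := by
    rintro rfl
    exact NeZero.ne n (by exact_mod_cast hd.trans (mul_zero _))
  have hdA : ((d : ℤ) : ZMod n) * A = 0 := by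
    rw [← Int.cast_mul, intCast_zmod_eq_zero_iff_dvd]
    exact ⟨e, by linear_combination d * he - e * hd⟩
  have hdV := h _ hdA
  rw [← Int.cast_mul, intCast_zmod_eq_zero_iff_dvd, hd, mul_comm d V] at hdV
  obtain ⟨c, hc⟩ := Int.dvd_of_mul_dvd_mul_right hd0 hdV
  refine ⟨(A.gcdA n * c : ℤ), ?_⟩
  rw [← Int.cast_mul, intCast_eq_intCast_iff_dvd_sub]
  exact ⟨A.gcdB n * c, by linear_combination hc + c * Int.gcd_eq_gcd_ab A n⟩

theorem baer_self : Module.Baer (ZMod n) (ZMod n) := by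
  have : IsPrincipalIdealRing (ZMod n) :=
    .of_surjective (Int.castRingHom (ZMod n)) intCast_surjective
  intro I g
  obtain ⟨a, rfl⟩ := (IsPrincipalIdealRing.principal I).principal
  have ha : a ∈ Ideal.span {a} := Ideal.mem_span_singleton_self a
  obtain ⟨t, ht⟩ := exists_mul_eq_of_annihilator_le (a := a) (v := g ⟨a, ha⟩) fun r hr => by
    rw [← smul_eq_mul, ← map_smul]
    exact (congrArg g (Subtype.ext hr)).trans g.map_zero
  refine ⟨LinearMap.mulRight (ZMod n) t, fun x hx => ?_⟩
  obtain ⟨r, rfl⟩ := Ideal.mem_span_singleton'.mp hx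
  rw [LinearMap.mulRight_apply, mul_assoc, ht, ← smul_eq_mul, ← map_smul]
  rfl

theorem exists_addMonoidHom_comp_eq_of_ker_le {M V : Type*} [AddCommGroup M] [AddCommGroup V]
    [Module (ZMod n) V] (g : M →+ V) (φ : M →+ ZMod n) (hker : g.ker ≤ φ.ker) :
    ∃ ψ : V →+ ZMod n, ψ.comp g = φ := by
  let S := AddSubgroup.toZModSubmodule n g.range
  let f : S →+ ZMod n := (QuotientAddGroup.lift g.ker φ hker).comp
    (QuotientAddGroup.quotientKerEquivRange g).symm.toAddMonoidHom
  obtain ⟨F, hF⟩ := baer_self.extension_property S.subtype S.injective_subtype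
    (f.toZModLinearMap n)
  refine ⟨F.toAddMonoidHom, AddMonoidHom.ext fun x => ?_⟩
  have hx : QuotientAddGroup.quotientKerEquivRange g x = ⟨g x, x, rfl⟩ := rfl
  refine (LinearMap.congr_fun hF ⟨g x, x, rfl⟩).trans ?_
  change QuotientAddGroup.lift g.ker φ hker
    ((QuotientAddGroup.quotientKerEquivRange g).symm ⟨g x, x, rfl⟩) = φ x
  rw [← hx, AddEquiv.symm_apply_apply]
  rfl

end ZMod

namespace FreeChainComplex

variable (X : FreeChainComplex) {n i : ℕ}

theorem redH_cls_eq_zero_iff (φ : X.Cochain i) (hφ : φ ∈ X.cocycles i) :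
    X.redH n i (X.cls i φ hφ) = 0 ↔ X.redCochain n i φ ∈ X.cobdsMod n i :=
  (QuotientAddGroup.eq_zero_iff _).trans AddSubgroup.mem_addSubgroupOf

theorem redCochain_mem_cobdsMod_of_comp_bdFrom_eq (φ : X.Cochain i) (ψ : X.CochainMod n (i - 1))
    (h : ψ.comp (X.bdFrom i) = X.redCochain n i φ) : X.redCochain n i φ ∈ X.cobdsMod n i := by
  cases i with
  | zero => simp [← h, bdFrom, cobdsMod]
  | succ j => exact ⟨ψ, h⟩

theorem exists_chain_not_dvd_of_redH_ne_zero [NeZero n] (φ : X.Cochain i)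
    (hφ : φ ∈ X.cocycles i) (hred : X.redH n i (X.cls i φ hφ) ≠ 0) :
    ∃ c : X.Chain i, (∃ c' : X.Chain (i - 1), X.bdFrom i c = (n : ℤ) • c') ∧ ¬ (n : ℤ) ∣ φ c := by
  by_contra! hcert
  let reduce := AddMonoidHom.compLeft (Int.castAddHom (ZMod n)) (X.ι (i - 1))
  obtain ⟨ψ, hψ⟩ := ZMod.exists_addMonoidHom_comp_eq_of_ker_le (reduce.comp (X.bdFrom i))
    (X.redCochain n i φ) fun c hc => by
      have hdvd (b : X.ι (i - 1)) : (n : ℤ) ∣ X.bdFrom i c b :=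
        (ZMod.intCast_zmod_eq_zero_iff_dvd _ _).1 (congr_fun hc b)
      choose c' hc' using hdvd
      exact (ZMod.intCast_zmod_eq_zero_iff_dvd _ _).2 (hcert c ⟨c', funext hc'⟩)
  exact hred ((X.redH_cls_eq_zero_iff φ hφ).2
    (X.redCochain_mem_cobdsMod_of_comp_bdFrom_eq φ (ψ.comp reduce) hψ))

end FreeChainComplex

theorem certificate_with_prime_power_modulus
    (X : FreeChainComplex) (i : ℕ) (h : X.H i)
    (p m : ℕ) (hp : p.Prime)
    (hred : X.redH (p ^ m) i h ≠ 0) :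
    ∃ (c : X.Chain i) (φ : X.Cochain i) (hφ : φ ∈ X.cocycles i),
      X.cls i φ hφ = h ∧
      (∃ c' : X.Chain (i - 1), X.bdFrom i c = ((p : ℤ) ^ m) • c') ∧
      ¬ (((p : ℤ) ^ m) ∣ φ c) := by
  have : NeZero (p ^ m) := ⟨pow_ne_zero m hp.ne_zero⟩
  obtain ⟨⟨φ, hφ⟩, rfl⟩ := QuotientAddGroup.mk_surjective h
  obtain ⟨c, hbd, hndvd⟩ := X.exists_chain_not_dvd_of_redH_ne_zero φ hφ hred
  push_cast at hbd hndvd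
  exact ⟨c, φ, hφ, rfl, hbd, hndvd⟩
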